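/- Let m_X, m_Y, Ω_X, Ω_Y, α, γ̄, C > 0 be real numbers and let f be the α-Beaulieu-Xie shadowed SNR probability density with normalizing constant C. Then for every real k ≥ 0 the function γ ↦ γ^k f(γ) is integrable on (0, ∞); in particular, all raw moments of the instantaneous SNR of the α-Beaulieu-Xie shadowed model are finite. -/

import Mathlib

/-!
Since `(a)ₙ/(b)ₙ` is a product of factors `(a+i)/(b+i) → 1`, it grows more slowly than `rⁿ`
for every `r > 1`, so `|₁F₁(a; b; z)| ≤ M e^{r|z|}`. As `δ < 1`, choosing `r` with `rδ < 1`
bounds `γᵏ f(γ)` by a multiple of `u^s exp(-c u^{α/2})` with `u = γ/γ̄`, `c > 0` and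
`s = k + α m_X/2 - 1 > -1`, which is integrable on `(0, ∞)`.
-/

open Real MeasureTheory Set

/-- Pochhammer symbol `(q)_n = q (q+1) ⋯ (q+n-1)`, with `(q)_0 = 1`. -/
noncomputable def poch (q : ℝ) (n : ℕ) : ℝ := ∏ i ∈ Finset.range n, (q + i)

/-- Confluent (Kummer) hypergeometric function `₁F₁(a; b; z)`. -/
noncomputable def oneF1 (a b z : ℝ) : ℝ :=
  ∑' n : ℕ, (poch a n / poch b n) * z ^ n / (n.factorial : ℝ)

/-- Gauss hypergeometric function `₂F₁(a, b; c; z)`. -/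
noncomputable def twoF1 (a b c z : ℝ) : ℝ :=
  ∑' n : ℕ, (poch a n * poch b n / poch c n) * z ^ n / (n.factorial : ℝ)

/-- Confluent Appell (Humbert) function `Φ₂(b₁, b₂; c; x, y)`. -/
noncomputable def Phi2 (b₁ b₂ c x y : ℝ) : ℝ :=
  ∑' p : ℕ × ℕ, (poch b₁ p.1 * poch b₂ p.2 / poch c (p.1 + p.2)) *
    x ^ p.1 * y ^ p.2 / ((p.1.factorial : ℝ) * (p.2.factorial : ℝ))

/-- The α-Beaulieu-Xie shadowed SNR probability density with parameters
`mX, mY, ΩX, ΩY, α`, average SNR `γbar` and normalizing constant `C`, where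
`θ = mY ΩX / (mY ΩX + mX ΩY)` and `δ = mX ΩY / (mY ΩX + mX ΩY)`. -/
noncomputable def aBXpdf (mX mY ΩX ΩY α γbar C γ : ℝ) : ℝ :=
  (α * (mY * ΩX / (mY * ΩX + mX * ΩY)) ^ mY / (2 * C ^ mX * Real.Gamma mX * γbar)) *
    (γ / γbar) ^ (α * mX / 2 - 1) * Real.exp (-(1 / C) * (γ / γbar) ^ (α / 2)) *
    oneF1 mY mX ((mX * ΩY / (mY * ΩX + mX * ΩY)) / C * (γ / γbar) ^ (α / 2))

open Filter Topology

lemma poch_pos {q : ℝ} (hq : 0 < q) (n : ℕ) : 0 < poch q n :=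
  Finset.prod_pos fun i _ => by positivity

lemma poch_succ (q : ℝ) (n : ℕ) : poch q (n + 1) = poch q n * (q + n) :=
  Finset.prod_range_succ _ _

lemma tendsto_add_div_add_atTop (a b : ℝ) :
    Tendsto (fun n : ℕ => (a + n) / (b + n)) atTop (𝓝 1) := by
  have h := (tendsto_natCast_div_add_atTop b).div (tendsto_natCast_div_add_atTop a) one_ne_zero
  rw [div_one] at h
  refine h.congr' ?_
  filter_upwards [eventually_gt_atTop 0, eventually_gt_atTop ⌈|a| + |b|⌉₊] with n hn hn'
  have hn0 : (0 : ℝ) < n := by exact_mod_cast hn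
  have := Nat.lt_of_ceil_lt hn'
  have ha : 0 < (n : ℝ) + a := by linarith [neg_abs_le a, abs_nonneg b]
  have hb : 0 < (n : ℝ) + b := by linarith [neg_abs_le b, abs_nonneg a]
  have hb' : b + n ≠ 0 := by linarith
  simp only [Pi.div_apply]
  field_simp
  ring

lemma exists_poch_div_poch_le {a b r : ℝ} (ha : 0 < a) (hb : 0 < b) (hr : 1 < r) :
    ∃ M, ∀ n, poch a n / poch b n ≤ M * r ^ n := by
  have hr0 : 0 < r := one_pos.trans hr
  set v : ℕ → ℝ := fun n => poch a n / poch b n / r ^ n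
  have hv (n : ℕ) : 0 < v n := div_pos (div_pos (poch_pos ha n) (poch_pos hb n)) (pow_pos hr0 n)
  have hratio : Tendsto (fun n => ‖v (n + 1)‖ / ‖v n‖) atTop (𝓝 (1 * r⁻¹)) := by
    refine ((tendsto_add_div_add_atTop a b).mul_const r⁻¹).congr fun n => ?_
    have := poch_pos ha n
    have := poch_pos hb n
    rw [Real.norm_of_nonneg (hv _).le, Real.norm_of_nonneg (hv _).le]
    simp only [v, poch_succ, pow_succ]
    field_simp
  have hsum := summable_of_ratio_test_tendsto_lt_one (by simpa using inv_lt_one_of_one_lt₀ hr)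
    (Eventually.of_forall fun n => (hv n).ne') hratio
  obtain ⟨M, hM⟩ := hsum.tendsto_atTop_zero.bddAbove_range
  exact ⟨M, fun n => (div_le_iff₀ (pow_pos hr0 n)).1 (hM ⟨n, rfl⟩)⟩

lemma norm_oneF1_term_le {a b r M : ℝ} (ha : 0 < a) (hb : 0 < b)
    (hM : ∀ n, poch a n / poch b n ≤ M * r ^ n) (z : ℝ) (n : ℕ) :
    ‖poch a n / poch b n * z ^ n / n.factorial‖ ≤ M * ((r * |z|) ^ n / n.factorial) := by
  have hpos : 0 < poch a n / poch b n := div_pos (poch_pos ha n) (poch_pos hb n)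
  rw [Real.norm_eq_abs, abs_div, abs_mul, abs_of_pos hpos, Nat.abs_cast, abs_pow, mul_pow]
  simp only [mul_div_assoc, ← mul_assoc]
  gcongr
  exact hM n

lemma summable_oneF1 {a b : ℝ} (ha : 0 < a) (hb : 0 < b) (z : ℝ) :
    Summable fun n : ℕ => poch a n / poch b n * z ^ n / n.factorial := by
  obtain ⟨M, hM⟩ := exists_poch_div_poch_le ha hb one_lt_two
  exact .of_norm_bounded ((Real.summable_pow_div_factorial _).mul_left M)
    (norm_oneF1_term_le ha hb hM z)

lemma exists_abs_oneF1_le_mul_exp {a b r : ℝ} (ha : 0 < a) (hb : 0 < b) (hr : 1 < r) :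
    ∃ M, ∀ z, |oneF1 a b z| ≤ M * exp (r * |z|) := by
  obtain ⟨M, hM⟩ := exists_poch_div_poch_le ha hb hr
  refine ⟨M, fun z => tsum_of_norm_bounded ?_ (norm_oneF1_term_le ha hb hM z)⟩
  rw [Real.exp_eq_exp_ℝ]
  exact (NormedSpace.expSeries_div_hasSum_exp _).mul_left M

lemma measurable_oneF1 {a b : ℝ} (ha : 0 < a) (hb : 0 < b) : Measurable (oneF1 a b) :=
  measurable_of_tendsto_metrizable (fun N => by fun_prop)
    (tendsto_pi_nhds.2 fun z => (summable_oneF1 ha hb z).hasSum.tendsto_sum_nat)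

lemma integrableOn_rpow_mul_exp_neg_mul_rpow_mul_oneF1 {a b s p β d : ℝ} (ha : 0 < a)
    (hb : 0 < b) (hs : -1 < s) (hp : 0 < p) (hd : |d| < β) :
    IntegrableOn (fun x => x ^ s * exp (-β * x ^ p) * oneF1 a b (d * x ^ p)) (Ioi 0) := by
  have hβd : 0 < β + |d| := by linarith [abs_nonneg d]
  -- `r = 2β / (β + |d|)` lies strictly between `1` and `β / |d|`.
  set r := 2 * β / (β + |d|)
  have hr : 1 < r := by rw [one_lt_div hβd]; linarith
  have hrd : 0 < β - r * |d| := by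
    rw [sub_pos, div_mul_eq_mul_div, div_lt_iff₀ hβd]; nlinarith [abs_nonneg d]
  obtain ⟨M, hM⟩ := exists_abs_oneF1_le_mul_exp ha hb hr
  refine ((integrableOn_rpow_mul_exp_neg_mul_rpow hs hp hrd).const_mul M).mono' ?_ ?_
  · have := measurable_oneF1 ha hb
    fun_prop
  · refine (ae_restrict_iff' measurableSet_Ioi).2 (.of_forall fun x (hx : 0 < x) => ?_)
    have hxp : 0 ≤ x ^ p := (rpow_pos_of_pos hx p).le
    calc ‖x ^ s * exp (-β * x ^ p) * oneF1 a b (d * x ^ p)‖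
        = x ^ s * exp (-β * x ^ p) * |oneF1 a b (d * x ^ p)| := by
          rw [Real.norm_eq_abs, abs_mul, abs_of_pos (by positivity)]
      _ ≤ x ^ s * exp (-β * x ^ p) * (M * exp (r * |d * x ^ p|)) := by
          gcongr
          exact hM _
      _ = M * (x ^ s * exp (-(β - r * |d|) * x ^ p)) := by
          rw [abs_mul, abs_of_nonneg hxp,
            show -(β - r * |d|) * x ^ p = -β * x ^ p + r * (|d| * x ^ p) by ring, exp_add]
          ring

/-- All raw moments of the instantaneous SNR of the α-Beaulieu-Xie shadowed
model are finite: `γ ↦ γ^k f(γ)` is integrable on `(0, ∞)` for every `k ≥ 0`. -/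
theorem statement_12 (mX mY ΩX ΩY α γbar C : ℝ) (hmX : 0 < mX) (hmY : 0 < mY)
    (hΩX : 0 < ΩX) (hΩY : 0 < ΩY) (hα : 0 < α) (hγbar : 0 < γbar) (hC : 0 < C)
    (k : ℝ) (hk : 0 ≤ k) :
    IntegrableOn (fun γ : ℝ => γ ^ k * aBXpdf mX mY ΩX ΩY α γbar C γ)
      (Set.Ioi 0) := by
  set θ := mY * ΩX / (mY * ΩX + mX * ΩY)
  set δ := mX * ΩY / (mY * ΩX + mX * ΩY)
  set A := α * θ ^ mY / (2 * C ^ mX * Real.Gamma mX * γbar)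
  have hδ : |δ / C| < 1 / C := by
    rw [abs_of_pos (by positivity)]
    gcongr
    rw [div_lt_one (by positivity)]
    linarith [mul_pos hmY hΩX]
  set g : ℝ → ℝ := fun x =>
    x ^ (k + (α * mX / 2 - 1)) * exp (-(1 / C) * x ^ (α / 2)) * oneF1 mY mX (δ / C * x ^ (α / 2))
  have hg : IntegrableOn g (Ioi 0) := integrableOn_rpow_mul_exp_neg_mul_rpow_mul_oneF1 hmY hmX
    (by nlinarith [mul_pos hα hmX]) (half_pos hα) hδ
  have hscaled : IntegrableOn (fun γ => A * γbar ^ k * g (γbar⁻¹ * γ)) (Ioi 0) :=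
    ((integrableOn_Ioi_comp_mul_left_iff g 0 (inv_pos.2 hγbar)).2 (by simpa using hg)).const_mul _
  refine hscaled.congr_fun (fun γ (hγ : 0 < γ) => ?_) measurableSet_Ioi
  have hu : 0 < γ / γbar := div_pos hγ hγbar
  have hγk : γ ^ k = γbar ^ k * (γ / γbar) ^ k := by
    rw [← mul_rpow hγbar.le hu.le, mul_div_cancel₀ _ hγbar.ne']
  simp only [g, aBXpdf, ← div_eq_inv_mul]
  rw [rpow_add hu, hγk]
  ring
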